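/- Let a, d₁, d₂ be positive integers and let Π be the orthogonal projection of (ℂ^a)^{⊗(d₁+d₂)} onto the symmetric subspace S^{d₁+d₂}(ℂ^a). Then for every ψ ∈ S^{d₁}(ℂ^a) and φ ∈ S^{d₂}(ℂ^a), one has ‖Π(ψ ⊗ φ)‖ ≥ C(d₁+d₂, d₁)^{−1/2} · ‖ψ‖ · ‖φ‖, where C(d₁+d₂, d₁) is the binomial coefficient. -/

import Mathlib

/-
Common definitions.

We model the tensor product `ℂ^{n₁} ⊗ ⋯ ⊗ ℂ^{n_m}` concretely as
`EuclideanSpace ℂ (∀ i, Fin (n i))` (coordinates with respect to the standard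
product basis), and the `d`-fold tensor power `(ℂ^a)^{⊗ d}` as
`EuclideanSpace ℂ (ι → Fin a)` for an index type `ι` of cardinality `d`.
-/

noncomputable section

open Finset

/-- The product (elementary tensor) vector `φ₁ ⊗ ⋯ ⊗ φ_m` in a multipartite space,
in coordinates. -/
def prodVec {m : ℕ} {n : Fin m → ℕ} (φ : ∀ i, EuclideanSpace ℂ (Fin (n i))) :
    EuclideanSpace ℂ (∀ i, Fin (n i)) :=
  WithLp.toLp 2 (fun v => ∏ i, φ i (v i))

/-- The product vector `φ₁ ⊗ ⋯ ⊗ φ_m` in `(ℂ^n)^{⊗ m}`, in coordinates. -/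
def prodVecC {m n : ℕ} (φ : Fin m → EuclideanSpace ℂ (Fin n)) :
    EuclideanSpace ℂ (Fin m → Fin n) :=
  WithLp.toLp 2 (fun v => ∏ i, φ i (v i))

/-- The product vector `φ₁ ⊗ φ₂` in a bipartite space, in coordinates. -/
def prodVec2 {ι₁ ι₂ : Type*} (φ₁ : EuclideanSpace ℂ ι₁) (φ₂ : EuclideanSpace ℂ ι₂) :
    EuclideanSpace ℂ (ι₁ × ι₂) :=
  WithLp.toLp 2 (fun p => φ₁ p.1 * φ₂ p.2)

/-- Geometric measure of entanglement of a subspace of a multipartite space: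
`E(U) = inf { 1 - ⟨φ₁⊗⋯⊗φ_m, Π_U (φ₁⊗⋯⊗φ_m)⟩ : ‖φ_i‖ = 1 }`, where we use that
`⟨x, Π_U x⟩ = ‖Π_U x‖²`. -/
def gme {m : ℕ} {n : Fin m → ℕ} (U : Submodule ℂ (EuclideanSpace ℂ (∀ i, Fin (n i)))) : ℝ :=
  sInf {x | ∃ φ : ∀ i, EuclideanSpace ℂ (Fin (n i)),
    (∀ i, ‖φ i‖ = 1) ∧ x = 1 - ‖Submodule.orthogonalProjection U (prodVec φ)‖ ^ 2}

/-- Geometric measure of entanglement of a subspace of `(ℂ^n)^{⊗ m}`. -/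
def gmeC {m n : ℕ} (U : Submodule ℂ (EuclideanSpace ℂ (Fin m → Fin n))) : ℝ :=
  sInf {x | ∃ φ : Fin m → EuclideanSpace ℂ (Fin n),
    (∀ i, ‖φ i‖ = 1) ∧ x = 1 - ‖Submodule.orthogonalProjection U (prodVecC φ)‖ ^ 2}

/-- Geometric measure of entanglement of a subspace of a bipartite space. -/
def gme2 {ι₁ ι₂ : Type*} [Fintype ι₁] [Fintype ι₂]
    (U : Submodule ℂ (EuclideanSpace ℂ (ι₁ × ι₂))) : ℝ :=
  sInf {x | ∃ (φ₁ : EuclideanSpace ℂ ι₁) (φ₂ : EuclideanSpace ℂ ι₂),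
    ‖φ₁‖ = 1 ∧ ‖φ₂‖ = 1 ∧ x = 1 - ‖Submodule.orthogonalProjection U (prodVec2 φ₁ φ₂)‖ ^ 2}

/-- The symmetric subspace `S^{|ι|}(ℂ^a)` of `(ℂ^a)^{⊗ ι}`: tensors invariant under all
permutations of the tensor factors. -/
def symmSub (a : ℕ) (ι : Type*) : Submodule ℂ (EuclideanSpace ℂ (ι → Fin a)) where
  carrier := {ψ | ∀ σ : Equiv.Perm ι, ∀ v : ι → Fin a, ψ (v ∘ σ) = ψ v}
  zero_mem' := fun _ _ => rfl
  add_mem' := by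
    intro x y hx hy σ v
    show x (v ∘ σ) + y (v ∘ σ) = x v + y v
    rw [hx σ v, hy σ v]
  smul_mem' := by
    intro c x hx σ v
    show c * x (v ∘ σ) = c * x v
    rw [hx σ v]

/-- Splitting an index `v : Fin d ⊕ Fin d → Fin a` into a pair of indices, realizing
`(ℂ^a)^{⊗ 2d} ≅ (ℂ^a)^{⊗ d} ⊗ (ℂ^a)^{⊗ d}`. -/
def pairSplit {a d : ℕ} (v : (Fin d ⊕ Fin d) → Fin a) : (Fin d → Fin a) × (Fin d → Fin a) :=
  (v ∘ Sum.inl, v ∘ Sum.inr)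

/-- The symmetric subspace `S^{2d}(ℂ^a)`, viewed inside
`(ℂ^a)^{⊗ d} ⊗ (ℂ^a)^{⊗ d} = EuclideanSpace ℂ ((Fin d → Fin a) × (Fin d → Fin a))`. -/
def symmSub2 (a d : ℕ) :
    Submodule ℂ (EuclideanSpace ℂ ((Fin d → Fin a) × (Fin d → Fin a))) where
  carrier := {ψ | ∀ σ : Equiv.Perm (Fin d ⊕ Fin d), ∀ v : (Fin d ⊕ Fin d) → Fin a,
    ψ (pairSplit (v ∘ σ)) = ψ (pairSplit v)}
  zero_mem' := fun _ _ => rfl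
  add_mem' := by
    intro x y hx hy σ v
    show x (pairSplit (v ∘ σ)) + y (pairSplit (v ∘ σ)) = x (pairSplit v) + y (pairSplit v)
    rw [hx σ v, hy σ v]
  smul_mem' := by
    intro c x hx σ v
    show c * x (pairSplit (v ∘ σ)) = c * x (pairSplit v)
    rw [hx σ v]

/-- The tensor product `W₁ ⊗ W₂` of subspaces, as the span of the elementary tensors,
inside the concrete bipartite space. -/
def tensorPairs {ι₁ ι₂ : Type*} [Fintype ι₁] [Fintype ι₂]
    (W₁ : Submodule ℂ (EuclideanSpace ℂ ι₁)) (W₂ : Submodule ℂ (EuclideanSpace ℂ ι₂)) :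
    Submodule ℂ (EuclideanSpace ℂ (ι₁ × ι₂)) :=
  Submodule.span ℂ {χ | ∃ ψ ∈ W₁, ∃ φ ∈ W₂, χ = prodVec2 ψ φ}

/-- The tensor product `U ⊗ V` of two bipartite subspaces
`U, V ⊆ ℂ^{ι₁} ⊗ ℂ^{ι₂}`, viewed as a bipartite subspace of
`(ℂ^{ι₁} ⊗ ℂ^{ι₁}) ⊗ (ℂ^{ι₂} ⊗ ℂ^{ι₂})` via the regrouping isomorphism that swaps
the middle two tensor factors. -/
def tensorSub {ι₁ ι₂ : Type*} [Fintype ι₁] [Fintype ι₂]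
    (U V : Submodule ℂ (EuclideanSpace ℂ (ι₁ × ι₂))) :
    Submodule ℂ (EuclideanSpace ℂ ((ι₁ × ι₁) × (ι₂ × ι₂))) :=
  Submodule.span ℂ {χ | ∃ ψ ∈ U, ∃ φ ∈ V,
    χ = WithLp.toLp 2 (fun p => ψ (p.1.1, p.2.1) * φ (p.1.2, p.2.2))}

/-- Entrywise complex conjugate of a vector, with respect to the standard basis. -/
def conjVec {ι : Type*} (ψ : EuclideanSpace ℂ ι) : EuclideanSpace ℂ ι :=
  WithLp.toLp 2 (fun v => starRingEnd ℂ (ψ v))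

/-- The subspace `Ū` of entrywise complex conjugates of vectors of `U`. -/
def conjSubmodule {ι : Type*} (U : Submodule ℂ (EuclideanSpace ℂ ι)) :
    Submodule ℂ (EuclideanSpace ℂ ι) where
  carrier := conjVec '' U
  zero_mem' := ⟨0, U.zero_mem, by
    ext v; show starRingEnd ℂ 0 = 0; exact map_zero _⟩
  add_mem' := by
    rintro a b ⟨x, hx, rfl⟩ ⟨y, hy, rfl⟩
    exact ⟨x + y, U.add_mem hx hy, by
      ext v; exact map_add (starRingEnd ℂ) (x v) (y v)⟩
  smul_mem' := by
    rintro c a ⟨x, hx, rfl⟩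
    refine ⟨starRingEnd ℂ c • x, U.smul_mem _ hx, ?_⟩
    ext v
    show starRingEnd ℂ (starRingEnd ℂ c * x v) = c * starRingEnd ℂ (x v)
    simp

/-- The content (type) of a word `w : Fin d → Fin a`: the vector `α ∈ ℤ_{≥0}^a`
recording how many times each letter occurs. -/
def wordContent {a d : ℕ} (w : Fin d → Fin a) : Fin a → ℕ :=
  fun i => (Finset.univ.filter fun j => w j = i).card

/-- The monomial orthonormal basis vector `|α⟩ = C(d,α)^{1/2} Π_{S^d(ℂ^a)} (e₁^{⊗α₁} ⊗ ⋯ ⊗ e_a^{⊗α_a})`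
of the symmetric subspace `S^d(ℂ^a)`, where `α = wordContent w` and
`e₁^{⊗α₁} ⊗ ⋯ ⊗ e_a^{⊗α_a}` is the standard basis vector of `(ℂ^a)^{⊗ d}` indexed by any word `w`
of content `α` (the projection does not depend on the choice of such a word). -/
def monVec (a d : ℕ) (w : Fin d → Fin a) : EuclideanSpace ℂ (Fin d → Fin a) :=
  (Real.sqrt (Nat.multinomial Finset.univ (wordContent w)) : ℂ) •
    (Submodule.orthogonalProjection (symmSub a (Fin d)) (EuclideanSpace.single w 1) :
      EuclideanSpace ℂ (Fin d → Fin a))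

/-- The squared Schmidt coefficients of a bipartite vector `ψ`, i.e. the eigenvalues of
`M Mᴴ` where `M` is the coefficient matrix of `ψ`. -/
def schmidtSqCoeffs {ι₁ ι₂ : Type*} [Fintype ι₁] [Fintype ι₂] [DecidableEq ι₁]
    (ψ : EuclideanSpace ℂ (ι₁ × ι₂)) : ι₁ → ℝ :=
  (Matrix.isHermitian_mul_conjTranspose_self (Matrix.of fun i j => ψ (i, j))).eigenvalues

/-- The Rényi `p`-entropy of (the squared Schmidt coefficients of) a bipartite vector. -/
def renyiEnt (p : ℝ) {ι₁ ι₂ : Type*} [Fintype ι₁] [Fintype ι₂] [DecidableEq ι₁]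
    (ψ : EuclideanSpace ℂ (ι₁ × ι₂)) : ℝ :=
  (1 / (1 - p)) * Real.logb 2 (∑ i, schmidtSqCoeffs ψ i ^ p)

/-- The minimum output Rényi `p`-entropy of a bipartite subspace. -/
def hminEnt (p : ℝ) {ι₁ ι₂ : Type*} [Fintype ι₁] [Fintype ι₂] [DecidableEq ι₁]
    (U : Submodule ℂ (EuclideanSpace ℂ (ι₁ × ι₂))) : ℝ :=
  sInf {x | ∃ ψ ∈ U, ‖ψ‖ = 1 ∧ x = renyiEnt p ψ}

end


/-!
Write `Π = (n!)⁻¹ ∑_σ U_σ` and `x = ψ ⊗ φ`, so that `‖Π x‖² = (n!)⁻¹ ∑_σ Re ⟪x, U_σ x⟫`.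
The `d₁! d₂!` permutations preserving the two blocks fix `x` and contribute `‖ψ‖² ‖φ‖²` each,
and every other term is nonnegative (Beauzamy–Bombieri–Enflo–Montgomery): using the symmetry of
`ψ` and `φ`, the slots exchanged by `σ` between the two blocks can be matched up, after which
`⟪x, U_σ x⟫ = ∑_{p,s} |∑_r G(p,r) conj H(r,s)|²` for suitable reshapings `G` of `ψ` and `H` of `φ`.
-/

open Finset Sum ComplexConjugate
open scoped InnerProductSpace

section Reindexing

variable {α β γ δ A M : Type*}

theorem Fintype.sum_sumArrow [Fintype α] [Fintype β] [DecidableEq α] [DecidableEq β] [Fintype A]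
    [AddCommMonoid M] (f : (α ⊕ β → A) → M) :
    ∑ v, f v = ∑ g : α → A, ∑ h : β → A, f (Sum.elim g h) := by
  rw [← (Equiv.sumArrowEquivProdArrow α β A).symm.sum_comp, Fintype.sum_prod_type]
  rfl

theorem Fintype.sum_arrow_of_sum_equiv {X Y : Type*} [Fintype α] [Fintype X] [Fintype Y]
    [DecidableEq α] [DecidableEq X] [DecidableEq Y] [Fintype A] [AddCommMonoid M]
    (e : X ⊕ Y ≃ α) (f : (α → A) → M) :
    ∑ g, f g = ∑ p : X → A, ∑ q : Y → A, f (Sum.elim p q ∘ e.symm) := by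
  rw [← (e.arrowCongr (Equiv.refl A)).sum_comp, Fintype.sum_sumArrow]
  rfl

def leftPreimageEquiv (σ : α ⊕ β ≃ γ ⊕ δ) :
    {i : γ // (σ.symm (inl i)).isLeft} ⊕ {k : δ // (σ.symm (inr k)).isLeft} ≃ α :=
  Equiv.subtypeSum.symm.trans ((σ.symm.subtypeEquiv fun _ => Iff.rfl).trans Equiv.sumIsLeft)

def rightPreimageEquiv (σ : α ⊕ β ≃ γ ⊕ δ) :
    {i : γ // ¬(σ.symm (inl i)).isLeft} ⊕ {k : δ // ¬(σ.symm (inr k)).isLeft} ≃ β :=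
  Equiv.subtypeSum.symm.trans
    ((σ.symm.subtypeEquiv fun _ => Sum.not_isLeft).trans Equiv.sumIsRight)

theorem apply_inl_leftPreimageEquiv (σ : α ⊕ β ≃ γ ⊕ δ) (z) :
    σ (inl (leftPreimageEquiv σ z)) = Sum.map Subtype.val Subtype.val z := by
  rcases z with ⟨i, h⟩ | ⟨k, h⟩ <;> simp [leftPreimageEquiv, Equiv.subtypeSum]

theorem apply_inr_rightPreimageEquiv (σ : α ⊕ β ≃ γ ⊕ δ) (z) :
    σ (inr (rightPreimageEquiv σ z)) = Sum.map Subtype.val Subtype.val z := by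
  rcases z with ⟨i, h⟩ | ⟨k, h⟩ <;> simp [rightPreimageEquiv, Equiv.subtypeSum]

theorem comp_inl_eq_elim_comp_leftPreimageEquiv_symm (σ : α ⊕ β ≃ γ ⊕ δ) (v : γ ⊕ δ → A) :
    v ∘ σ ∘ inl = Sum.elim (v ∘ inl ∘ Subtype.val) (v ∘ inr ∘ Subtype.val) ∘
      (leftPreimageEquiv σ).symm := by
  funext j
  obtain ⟨z, rfl⟩ := (leftPreimageEquiv σ).surjective j
  rcases z with i | k <;> simp [apply_inl_leftPreimageEquiv]

theorem comp_inr_eq_elim_comp_rightPreimageEquiv_symm (σ : α ⊕ β ≃ γ ⊕ δ) (v : γ ⊕ δ → A) :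
    v ∘ σ ∘ inr = Sum.elim (v ∘ inl ∘ Subtype.val) (v ∘ inr ∘ Subtype.val) ∘
      (rightPreimageEquiv σ).symm := by
  funext j
  obtain ⟨z, rfl⟩ := (rightPreimageEquiv σ).surjective j
  rcases z with i | k <;> simp [apply_inr_rightPreimageEquiv]

theorem card_not_isLeft_symm_inl_eq_card_isLeft_symm_inr [Fintype α] [Fintype β]
    (σ : Equiv.Perm (α ⊕ β)) :
    Fintype.card {i : α // ¬(σ.symm (inl i)).isLeft} =
      Fintype.card {k : β // (σ.symm (inr k)).isLeft} := by
  have h := Fintype.card_congr (leftPreimageEquiv σ)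
  rw [Fintype.card_sum] at h
  rw [Fintype.card_subtype_compl, ← h, Nat.add_sub_cancel_left]

end Reindexing

theorem re_sum_conj_mul_swap_nonneg {P Q R S : Type*} [Fintype P] [Fintype Q] [Fintype R]
    [Fintype S] (G : P → Q → ℂ) (H : R → S → ℂ) (e : Q ≃ R) :
    0 ≤ (∑ p, ∑ q, ∑ r, ∑ s, conj (G p q * H r s) * (G p (e.symm r) * H (e q) s)).re := by
  have key : ∀ p, ∑ q, ∑ r, ∑ s, conj (G p q * H r s) * (G p (e.symm r) * H (e q) s) =
      ∑ s, (Complex.normSq (∑ r, G p (e.symm r) * conj (H r s)) : ℂ) := by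
    intro p
    simp_rw [Complex.normSq_eq_conj_mul_self, map_sum, map_mul, Complex.conj_conj, sum_mul_sum]
    rw [← e.symm.sum_comp]
    simp only [Equiv.apply_symm_apply]
    refine (sum_congr rfl fun i _ => sum_comm).trans (sum_comm.trans ?_)
    exact sum_congr rfl fun s _ => sum_congr rfl fun i _ => sum_congr rfl fun j _ => by ring
  rw [Complex.re_sum]
  refine sum_nonneg fun p _ => ?_
  rw [key, Complex.re_sum]
  exact sum_nonneg fun s _ => Complex.normSq_nonneg _

section SymmetricTensors

variable {a : ℕ} {α β ι : Type*}

theorem apply_comp_symm_eq_of_mem_symmSub {X Y : Type*} {ψ : EuclideanSpace ℂ (α → Fin a)}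
    (hψ : ψ ∈ symmSub a α) (w : Y → Fin a) (θ : X ≃ Y) (e : X ≃ α) (e' : Y ≃ α) :
    ψ (w ∘ θ ∘ e.symm) = ψ (w ∘ e'.symm) := by
  have : w ∘ θ ∘ e.symm = (w ∘ e'.symm) ∘ (e.symm.trans (θ.trans e')) := by
    funext i; simp
  rw [this]
  exact hψ _ _

def tensorVec (ψ : EuclideanSpace ℂ (α → Fin a)) (φ : EuclideanSpace ℂ (β → Fin a)) :
    EuclideanSpace ℂ (α ⊕ β → Fin a) :=
  WithLp.toLp 2 fun v => ψ (v ∘ inl) * φ (v ∘ inr)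

def permTensor (σ : Equiv.Perm ι) (x : EuclideanSpace ℂ (ι → Fin a)) :
    EuclideanSpace ℂ (ι → Fin a) :=
  WithLp.toLp 2 fun v => x (v ∘ σ)

variable [Fintype α] [Fintype β] [DecidableEq α] [DecidableEq β]

theorem norm_tensorVec (ψ : EuclideanSpace ℂ (α → Fin a)) (φ : EuclideanSpace ℂ (β → Fin a)) :
    ‖tensorVec ψ φ‖ = ‖ψ‖ * ‖φ‖ := by
  rw [← sq_eq_sq₀ (norm_nonneg _) (by positivity), mul_pow, EuclideanSpace.norm_sq_eq,
    EuclideanSpace.norm_sq_eq, EuclideanSpace.norm_sq_eq, Fintype.sum_sumArrow, sum_mul_sum]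
  simp [tensorVec, mul_pow]

theorem re_inner_tensorVec_permTensor_nonneg {ψ : EuclideanSpace ℂ (α → Fin a)}
    {φ : EuclideanSpace ℂ (β → Fin a)} (hψ : ψ ∈ symmSub a α) (hφ : φ ∈ symmSub a β)
    (σ : Equiv.Perm (α ⊕ β)) :
    0 ≤ RCLike.re ⟪tensorVec ψ φ, permTensor σ (tensorVec ψ φ)⟫_ℂ := by
  -- `cα` splits the first block into the slots that `ψ` still reads in the permuted tensor and
  -- those that `φ` reads there, `cβ` splits the second block likewise; `θ` matches the
  -- exchanged slots.
  let cα := Equiv.sumCompl fun i : α => (σ.symm (inl i)).isLeft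
  let cβ := Equiv.sumCompl fun k : β => (σ.symm (inr k)).isLeft
  let θ := Fintype.equivOfCardEq (card_not_isLeft_symm_inl_eq_card_isLeft_symm_inr σ)
  let Ψ : _ → _ → ℂ := fun p q => ψ (Sum.elim p q ∘ cα.symm)
  let Φ : _ → _ → ℂ := fun r s => φ (Sum.elim r s ∘ cβ.symm)
  let glue p q r s : α ⊕ β → Fin a := Sum.elim (Sum.elim p q ∘ cα.symm) (Sum.elim r s ∘ cβ.symm)
  have hψσ : ∀ p q r s, ψ (glue p q r s ∘ σ ∘ inl) = Ψ p (r ∘ θ) := by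
    intro p q r s
    have hp : glue p q r s ∘ inl ∘ Subtype.val = p := funext fun i => by simp [glue, cα, i.2]
    have hr : glue p q r s ∘ inr ∘ Subtype.val = r := funext fun k => by simp [glue, cβ, k.2]
    rw [comp_inl_eq_elim_comp_leftPreimageEquiv_symm, hp, hr,
      ← apply_comp_symm_eq_of_mem_symmSub hψ _ ((Equiv.refl _).sumCongr θ) cα]
    simp only [Equiv.sumCongr, Equiv.coe_fn_mk, ← Function.comp_assoc, Sum.elim_comp_map]
    rfl
  have hφσ : ∀ p q r s, φ (glue p q r s ∘ σ ∘ inr) = Φ (q ∘ θ.symm) s := by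
    intro p q r s
    have hq : glue p q r s ∘ inl ∘ Subtype.val = q := funext fun i => by simp [glue, cα, i.2]
    have hs : glue p q r s ∘ inr ∘ Subtype.val = s := funext fun k => by simp [glue, cβ, k.2]
    rw [comp_inr_eq_elim_comp_rightPreimageEquiv_symm, hq, hs,
      ← apply_comp_symm_eq_of_mem_symmSub hφ _ (θ.symm.sumCongr (Equiv.refl _)) cβ]
    simp only [Equiv.sumCongr, Equiv.coe_fn_mk, ← Function.comp_assoc, Sum.elim_comp_map]
    rfl
  have hsum : ⟪tensorVec ψ φ, permTensor σ (tensorVec ψ φ)⟫_ℂ =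
      ∑ p, ∑ q, ∑ r, ∑ s, conj (Ψ p q * Φ r s) * (Ψ p (r ∘ θ) * Φ (q ∘ θ.symm) s) := by
    rw [PiLp.inner_apply, Fintype.sum_sumArrow]
    simp_rw [Fintype.sum_arrow_of_sum_equiv cα, Fintype.sum_arrow_of_sum_equiv cβ]
    refine sum_congr rfl fun p _ => sum_congr rfl fun q _ => sum_congr rfl fun r _ =>
      sum_congr rfl fun s _ => ?_
    rw [RCLike.inner_apply']
    show conj (Ψ p q * Φ r s) * (ψ (glue p q r s ∘ σ ∘ inl) * φ (glue p q r s ∘ σ ∘ inr)) = _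
    rw [hψσ, hφσ]
  rw [hsum]
  exact re_sum_conj_mul_swap_nonneg Ψ Φ (θ.arrowCongr (Equiv.refl _))

end SymmetricTensors

section Projection

variable {a : ℕ} {ι : Type*} [Fintype ι] [DecidableEq ι]

theorem inner_permTensor_of_mem_symmSub (τ : Equiv.Perm ι) (x : EuclideanSpace ℂ (ι → Fin a))
    {w : EuclideanSpace ℂ (ι → Fin a)} (hw : w ∈ symmSub a ι) :
    ⟪permTensor τ x, w⟫_ℂ = ⟪x, w⟫_ℂ := by
  rw [PiLp.inner_apply, PiLp.inner_apply, ← (τ.arrowCongr (Equiv.refl (Fin a))).sum_comp]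
  refine sum_congr rfl fun u _ => ?_
  have hu : (τ.arrowCongr (Equiv.refl (Fin a)) u) ∘ τ = u := by funext i; simp
  simp only [permTensor, PiLp.toLp_apply, hu]
  rw [show w (τ.arrowCongr (Equiv.refl (Fin a)) u) = w u from hw τ.symm u]

theorem starProjection_symmSub (x : EuclideanSpace ℂ (ι → Fin a)) :
    (symmSub a ι).starProjection x =
      ((Fintype.card ι).factorial : ℂ)⁻¹ • ∑ τ : Equiv.Perm ι, permTensor τ x := by
  refine Submodule.eq_starProjection_of_mem_of_inner_eq_zero ?_ fun w hw => ?_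
  · intro ρ v
    simp only [PiLp.smul_apply, WithLp.ofLp_sum, Finset.sum_apply, permTensor, smul_eq_mul]
    congr 1
    exact Equiv.sum_comp (Equiv.mulLeft ρ) fun τ : Equiv.Perm ι => x (v ∘ τ)
  · rw [inner_sub_left, inner_smul_left, sum_inner,
      sum_congr rfl fun τ _ => inner_permTensor_of_mem_symmSub τ x hw, sum_const, card_univ,
      Fintype.card_perm, nsmul_eq_mul, map_inv₀, map_natCast, inv_mul_cancel_left₀, sub_self]
    exact_mod_cast (Fintype.card ι).factorial_ne_zero

theorem norm_orthogonalProjectionOnto_symmSub_sq (x : EuclideanSpace ℂ (ι → Fin a)) :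
    ‖(symmSub a ι).orthogonalProjectionOnto x‖ ^ 2 =
      ((Fintype.card ι).factorial : ℝ)⁻¹ *
        ∑ τ : Equiv.Perm ι, RCLike.re ⟪x, permTensor τ x⟫_ℂ := by
  rw [← Submodule.re_inner_starProjection_eq_normSq, Submodule.inner_starProjection_left_eq_right,
    starProjection_symmSub, inner_smul_right, inner_sum, ← RCLike.ofReal_natCast,
    ← RCLike.ofReal_inv, RCLike.re_ofReal_mul, map_sum]

end Projection

section ProductTensors

variable {a : ℕ} {α β : Type*} {ψ : EuclideanSpace ℂ (α → Fin a)}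
  {φ : EuclideanSpace ℂ (β → Fin a)}

theorem permTensor_sumCongr_tensorVec (hψ : ψ ∈ symmSub a α) (hφ : φ ∈ symmSub a β)
    (τ₁ : Equiv.Perm α) (τ₂ : Equiv.Perm β) :
    permTensor (Equiv.sumCongr τ₁ τ₂) (tensorVec ψ φ) = tensorVec ψ φ := by
  ext v
  exact congrArg₂ (· * ·) (hψ τ₁ (v ∘ inl)) (hφ τ₂ (v ∘ inr))

variable [Fintype α] [Fintype β] [DecidableEq α] [DecidableEq β]

theorem factorial_mul_factorial_mul_sq_le_sum_re_inner_permTensor (hψ : ψ ∈ symmSub a α)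
    (hφ : φ ∈ symmSub a β) :
    ((Fintype.card α).factorial * (Fintype.card β).factorial : ℝ) * (‖ψ‖ * ‖φ‖) ^ 2 ≤
      ∑ τ : Equiv.Perm (α ⊕ β), RCLike.re ⟪tensorVec ψ φ, permTensor τ (tensorVec ψ φ)⟫_ℂ := by
  calc ((Fintype.card α).factorial * (Fintype.card β).factorial : ℝ) * (‖ψ‖ * ‖φ‖) ^ 2
      = ∑ τ ∈ univ.image (Equiv.Perm.sumCongrHom α β),
          RCLike.re ⟪tensorVec ψ φ, permTensor τ (tensorVec ψ φ)⟫_ℂ := by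
        rw [sum_image fun _ _ _ _ h => Equiv.Perm.sumCongrHom_injective h]
        simp only [Equiv.Perm.sumCongrHom_apply, permTensor_sumCongr_tensorVec hψ hφ,
          inner_self_eq_norm_sq, norm_tensorVec, sum_const, card_univ, Fintype.card_prod,
          Fintype.card_perm, nsmul_eq_mul, Nat.cast_mul]
    _ ≤ _ := sum_le_sum_of_subset_of_nonneg (subset_univ _) fun τ _ _ =>
        re_inner_tensorVec_permTensor_nonneg hψ hφ τ

theorem inv_choose_mul_norm_sq_le_norm_orthogonalProjectionOnto_sq (hψ : ψ ∈ symmSub a α)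
    (hφ : φ ∈ symmSub a β) :
    (((Fintype.card α + Fintype.card β).choose (Fintype.card α) : ℕ) : ℝ)⁻¹ * (‖ψ‖ * ‖φ‖) ^ 2 ≤
      ‖(symmSub a (α ⊕ β)).orthogonalProjectionOnto (tensorVec ψ φ)‖ ^ 2 := by
  set m := Fintype.card α
  set n := Fintype.card β
  have hfact : ((m + n).factorial : ℝ) = (m + n).choose m * (m.factorial * n.factorial) := by
    rw [Nat.choose_symm_add, ← mul_assoc]
    exact_mod_cast (Nat.add_choose_mul_factorial_mul_factorial m n).symm
  rw [norm_orthogonalProjectionOnto_symmSub_sq, Fintype.card_sum, hfact, mul_inv, mul_assoc]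
  gcongr
  rw [le_inv_mul_iff₀ (by positivity)]
  exact factorial_mul_factorial_mul_sq_le_sum_re_inner_permTensor hψ hφ

end ProductTensors

theorem stmt2_general (a d₁ d₂ : ℕ)
    (ψ : EuclideanSpace ℂ (Fin d₁ → Fin a)) (φ : EuclideanSpace ℂ (Fin d₂ → Fin a))
    (hψ : ψ ∈ symmSub a (Fin d₁)) (hφ : φ ∈ symmSub a (Fin d₂)) :
    (Real.sqrt ((d₁ + d₂).choose d₁))⁻¹ * ‖ψ‖ * ‖φ‖ ≤
      ‖Submodule.orthogonalProjection (symmSub a (Fin d₁ ⊕ Fin d₂))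
        (WithLp.toLp 2 (fun v => ψ (v ∘ Sum.inl) * φ (v ∘ Sum.inr)) :
          EuclideanSpace ℂ ((Fin d₁ ⊕ Fin d₂) → Fin a))‖ := by
  have h := inv_choose_mul_norm_sq_le_norm_orthogonalProjectionOnto_sq hψ hφ
  simp only [Fintype.card_fin] at h
  rw [← pow_le_pow_iff_left₀ (by positivity) (norm_nonneg _) two_ne_zero, mul_assoc, mul_pow,
    inv_pow, Real.sq_sqrt (Nat.cast_nonneg _)]
  exact h

/-- Beauzamy–Bombieri–Enflo–Montgomery. For symmetric tensors
`ψ ∈ S^{d₁}(ℂ^a)` and `φ ∈ S^{d₂}(ℂ^a)`, the projection of `ψ ⊗ φ` onto the symmetric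
subspace `S^{d₁+d₂}(ℂ^a)` has norm at least `C(d₁+d₂,d₁)^{-1/2} ‖ψ‖ ‖φ‖`. Here
`(ℂ^a)^{⊗(d₁+d₂)}` is indexed by `Fin d₁ ⊕ Fin d₂`. -/
theorem stmt2 (a d₁ d₂ : ℕ) (ha : 0 < a) (hd₁ : 0 < d₁) (hd₂ : 0 < d₂)
    (ψ : EuclideanSpace ℂ (Fin d₁ → Fin a)) (φ : EuclideanSpace ℂ (Fin d₂ → Fin a))
    (hψ : ψ ∈ symmSub a (Fin d₁)) (hφ : φ ∈ symmSub a (Fin d₂)) :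
    (Real.sqrt ((d₁ + d₂).choose d₁))⁻¹ * ‖ψ‖ * ‖φ‖ ≤
      ‖Submodule.orthogonalProjection (symmSub a (Fin d₁ ⊕ Fin d₂))
        (WithLp.toLp 2 (fun v => ψ (v ∘ Sum.inl) * φ (v ∘ Sum.inr)) :
          EuclideanSpace ℂ ((Fin d₁ ⊕ Fin d₂) → Fin a))‖ :=
  stmt2_general a d₁ d₂ ψ φ hψ hφ
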